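/- For θ ∈ [0,π], let e_θ denote the Born-rule empirical model of the state |diag;θ,π/4⟩ = cos(θ/2)·|0⟩⊗|0⟩ + e^{iπ/4} sin(θ/2)·|1⟩⊗|1⟩ in the two-party Bell scenario in which both Alice's and Bob's two measurements are given by the Pauli bases B_x = {(|0⟩+|1⟩)/√2, (|0⟩−|1⟩)/√2} and B_y = {(|0⟩+i|1⟩)/√2, (|0⟩−i|1⟩)/√2}. If π/4 < θ < 3π/4 (equivalently sin θ > √2/2), then e_θ is contextual: no probability distribution d on functions g : {a₁,a₂,b₁,b₂} → {0,1} has marginals to the four contexts {a_i, b_j} equal to (e_θ)_{{a_i,b_j}}; consequently CF(e_θ) > 0. -/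

import Mathlib

open scoped ComplexConjugate

/-- Standard Hermitian inner product on `ℂ²` (conjugate-linear in the first slot). -/
noncomputable def ip2 (u v : Fin 2 → ℂ) : ℂ := ∑ i, conj (u i) * v i

/-- Tensor product `u ⊗ v ∈ ℂ² ⊗ ℂ²`, as a function on `Fin 2 × Fin 2`. -/
noncomputable def tens (u v : Fin 2 → ℂ) : Fin 2 × Fin 2 → ℂ := fun p => u p.1 * v p.2

/-- Standard Hermitian inner product on `ℂ² ⊗ ℂ²` (conjugate-linear in the
first slot). -/
noncomputable def ip4 (u v : Fin 2 × Fin 2 → ℂ) : ℂ := ∑ p, conj (u p) * v p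

/-- Bloch vector `|θ,φ⟩ = cos(θ/2)|0⟩ + e^{iφ} sin(θ/2)|1⟩`. -/
noncomputable def bloch (θ φ : ℝ) : Fin 2 → ℂ :=
  ![(Real.cos (θ / 2) : ℂ), Complex.exp (φ * Complex.I) * (Real.sin (θ / 2) : ℂ)]

/-- The orthonormal basis `B(θ,φ) = {|θ,φ⟩, |π−θ,π+φ⟩}` of `ℂ²`, indexed by the
outcome. -/
noncomputable def Bbasis (θ φ : ℝ) : Fin 2 → Fin 2 → ℂ :=
  ![bloch θ φ, bloch (Real.pi - θ) (Real.pi + φ)]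

/-- The Born-rule empirical model of the state `ψ ∈ ℂ² ⊗ ℂ²` when Alice's
measurement `a_{i+1}` is given by the orthonormal basis `A i` and Bob's
measurement `b_{j+1}` by the orthonormal basis `B j`:
`e_{{a_i,b_j}}(s,t) = |⟨α_{i,s} ⊗ β_{j,t}, ψ⟩|²`. -/
noncomputable def born (A B : Fin 2 → Fin 2 → Fin 2 → ℂ) (ψ : Fin 2 × Fin 2 → ℂ) :
    Fin 2 → Fin 2 → Fin 2 → Fin 2 → ℝ := fun i j s t =>
  ‖ip4 (tens (A i s) (B j t)) ψ‖ ^ 2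

/-- An empirical model on the two-party Bell scenario: for each context
`{a_{i+1}, b_{j+1}}` a probability distribution on joint outcomes `(s, t)`. -/
def IsModel (e : Fin 2 → Fin 2 → Fin 2 → Fin 2 → ℝ) : Prop :=
  (∀ i j s t, 0 ≤ e i j s t) ∧ ∀ i j, (∑ s, ∑ t, e i j s t) = 1

/-- Noncontextuality: a global probability distribution on assignments
`g : {a₁,a₂,b₁,b₂} → {0,1}` (with `X` encoded as `Fin 2 ⊕ Fin 2`, `inl i = a_{i+1}`,
`inr j = b_{j+1}`) marginalises to every context. -/
def Noncontextual (e : Fin 2 → Fin 2 → Fin 2 → Fin 2 → ℝ) : Prop :=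
  ∃ d : (Fin 2 ⊕ Fin 2 → Fin 2) → ℝ,
    (∀ g, 0 ≤ d g) ∧ (∑ g, d g) = 1 ∧
    ∀ i j s t, (∑ g ∈ Finset.univ.filter
        (fun g : Fin 2 ⊕ Fin 2 → Fin 2 => g (.inl i) = s ∧ g (.inr j) = t), d g)
      = e i j s t

/-- The noncontextual fraction of an empirical model. -/
noncomputable def NCF (e : Fin 2 → Fin 2 → Fin 2 → Fin 2 → ℝ) : ℝ :=
  sSup {l : ℝ | 0 ≤ l ∧ l ≤ 1 ∧
    ∃ eNC e' : Fin 2 → Fin 2 → Fin 2 → Fin 2 → ℝ,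
      IsModel eNC ∧ Noncontextual eNC ∧ IsModel e' ∧
      ∀ i j s t, e i j s t = l * eNC i j s t + (1 - l) * e' i j s t}

/-- The contextual fraction of an empirical model. -/
noncomputable def CF (e : Fin 2 → Fin 2 → Fin 2 → Fin 2 → ℝ) : ℝ := 1 - NCF e

/-- Diagonal two-qubit state `|diag;θ,φ⟩ = cos(θ/2)|00⟩ + e^{iφ} sin(θ/2)|11⟩`. -/
noncomputable def diagState (θ φ : ℝ) : Fin 2 × Fin 2 → ℂ := fun p =>
  if p = (0, 0) then (Real.cos (θ / 2) : ℂ)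
  else if p = (1, 1) then Complex.exp (φ * Complex.I) * (Real.sin (θ / 2) : ℂ)
  else 0

/-- The Pauli `x` basis `{(|0⟩+|1⟩)/√2, (|0⟩−|1⟩)/√2}`. -/
noncomputable def Bx : Fin 2 → Fin 2 → ℂ :=
  ![![((Real.sqrt 2)⁻¹ : ℂ), ((Real.sqrt 2)⁻¹ : ℂ)],
    ![((Real.sqrt 2)⁻¹ : ℂ), -((Real.sqrt 2)⁻¹ : ℂ)]]

/-- The Pauli `y` basis `{(|0⟩+i|1⟩)/√2, (|0⟩−i|1⟩)/√2}`. -/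
noncomputable def By : Fin 2 → Fin 2 → ℂ :=
  ![![((Real.sqrt 2)⁻¹ : ℂ), Complex.I * ((Real.sqrt 2)⁻¹ : ℂ)],
    ![((Real.sqrt 2)⁻¹ : ℂ), -(Complex.I * ((Real.sqrt 2)⁻¹ : ℂ))]]

/-- Alice's (= Bob's) measurements in the scenario `S(B_x, B_y)`. -/
noncomputable def pauliMeas : Fin 2 → Fin 2 → Fin 2 → ℂ := ![Bx, By]

/-!
The CHSH value `⟨a₁b₁⟩ + ⟨a₁b₂⟩ + ⟨a₂b₁⟩ − ⟨a₂b₂⟩` of a noncontextual model is an average of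
the values of deterministic assignments, each at most `2`; for an arbitrary model it is at most `4`.
Writing the Pauli basis vectors as `(|0⟩ + ω|1⟩)/√2` with `ω ∈ {±1, ±i}`, the Born rule gives the
model of `|diag;θ,φ⟩` the correlations `sin θ · Re (conj (ω ω') e^{iφ})` up to the outcome signs,
hence the CHSH value `2 sin θ (cos φ + sin φ)`, which is `2√2 sin θ > 2` at `φ = π/4`.
In a decomposition `λ e^NC + (1 − λ) e'` this forces `2λ + 4(1 − λ) ≥ 2√2 sin θ`, so `λ < 1`.
-/

open Finset

def spin : Fin 2 → ℝ := ![1, -1]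

def correlation (e : Fin 2 → Fin 2 → Fin 2 → Fin 2 → ℝ) (i j : Fin 2) : ℝ :=
  ∑ s, ∑ t, spin s * spin t * e i j s t

def chsh (e : Fin 2 → Fin 2 → Fin 2 → Fin 2 → ℝ) : ℝ :=
  correlation e 0 0 + correlation e 0 1 + correlation e 1 0 - correlation e 1 1

section CHSH

variable {e e₁ e₂ : Fin 2 → Fin 2 → Fin 2 → Fin 2 → ℝ}

lemma abs_correlation_le_one (he : IsModel e) (i j : Fin 2) : |correlation e i j| ≤ 1 := by
  obtain ⟨hnonneg, hsum⟩ := he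
  have hij := hsum i j
  simp only [Fin.sum_univ_two] at hij
  simp only [correlation, Fin.sum_univ_two, spin, Matrix.cons_val_zero, Matrix.cons_val_one]
  rw [abs_le]
  constructor <;> linarith [hnonneg i j 0 0, hnonneg i j 0 1, hnonneg i j 1 0, hnonneg i j 1 1]

lemma chsh_le_four (he : IsModel e) : chsh e ≤ 4 := by
  have h := abs_correlation_le_one he
  have h00 := (abs_le.1 (h 0 0)).2
  have h01 := (abs_le.1 (h 0 1)).2
  have h10 := (abs_le.1 (h 1 0)).2
  have h11 := (abs_le.1 (h 1 1)).1
  unfold chsh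
  linarith

lemma chsh_assignment_le_two (a₀ a₁ b₀ b₁ : Fin 2) :
    spin a₀ * spin b₀ + spin a₀ * spin b₁ + spin a₁ * spin b₀ - spin a₁ * spin b₁ ≤ 2 := by
  fin_cases a₀ <;> fin_cases a₁ <;> fin_cases b₀ <;> fin_cases b₁ <;> norm_num [spin]

lemma correlation_eq_sum_of_marginals {d : (Fin 2 ⊕ Fin 2 → Fin 2) → ℝ}
    (hd : ∀ i j s t, (∑ g ∈ univ.filter
        (fun g : Fin 2 ⊕ Fin 2 → Fin 2 => g (.inl i) = s ∧ g (.inr j) = t), d g) = e i j s t)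
    (i j : Fin 2) :
    correlation e i j = ∑ g, spin (g (.inl i)) * spin (g (.inr j)) * d g := by
  rw [← sum_fiberwise univ (fun g : Fin 2 ⊕ Fin 2 → Fin 2 => (g (.inl i), g (.inr j))),
    Fintype.sum_prod_type, correlation]
  refine sum_congr rfl fun s _ => sum_congr rfl fun t _ => ?_
  rw [← hd, mul_sum]
  refine sum_congr (by ext g; simp [Prod.ext_iff]) fun g hg => ?_
  obtain ⟨rfl, rfl⟩ := (mem_filter.1 hg).2
  rfl

theorem chsh_le_two_of_noncontextual (he : Noncontextual e) : chsh e ≤ 2 := by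
  obtain ⟨d, hd_nonneg, hd_sum, hd⟩ := he
  calc chsh e
      = ∑ g, (spin (g (.inl 0)) * spin (g (.inr 0)) + spin (g (.inl 0)) * spin (g (.inr 1))
          + spin (g (.inl 1)) * spin (g (.inr 0)) - spin (g (.inl 1)) * spin (g (.inr 1)))
          * d g := by
        simp only [chsh, correlation_eq_sum_of_marginals hd, add_mul, sub_mul, sum_add_distrib,
          sum_sub_distrib]
    _ ≤ ∑ g, 2 * d g :=
        sum_le_sum fun g _ => mul_le_mul_of_nonneg_right (chsh_assignment_le_two _ _ _ _)
          (hd_nonneg g)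
    _ = 2 := by rw [← mul_sum, hd_sum, mul_one]

lemma chsh_mixture {l : ℝ}
    (h : ∀ i j s t, e i j s t = l * e₁ i j s t + (1 - l) * e₂ i j s t) :
    chsh e = l * chsh e₁ + (1 - l) * chsh e₂ := by
  simp only [chsh, correlation, h, Fin.sum_univ_two]
  ring

theorem NCF_lt_one_of_two_lt_chsh (he : 2 < chsh e) : NCF e < 1 := by
  -- `Real.sSup_le` needs a nonnegative bound because `sSup ∅ = 0`.
  have hbound : NCF e ≤ max ((4 - chsh e) / 2) 0 := by
    refine Real.sSup_le ?_ (le_max_right _ _)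
    rintro l ⟨hl₀, hl₁, e₁, e₂, -, he₁, he₂, hmix⟩
    have h₁ := mul_le_mul_of_nonneg_left (chsh_le_two_of_noncontextual he₁) hl₀
    have h₂ := mul_le_mul_of_nonneg_left (chsh_le_four he₂) (sub_nonneg.2 hl₁)
    have := chsh_mixture hmix
    exact le_max_of_le_left (by linarith)
  exact hbound.trans_lt (max_lt (by linarith) one_pos)

lemma correlation_eq_of_forall_eq {i j : Fin 2} {c : ℝ}
    (h : ∀ s t, e i j s t = (1 + spin s * spin t * c) / 4) : correlation e i j = c := by
  simp only [correlation, h, Fin.sum_univ_two, spin, Matrix.cons_val_zero, Matrix.cons_val_one]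
  ring

end CHSH

open Complex

lemma ip4_tens_diagState (u v : Fin 2 → ℂ) (θ φ : ℝ) :
    ip4 (tens u v) (diagState θ φ)
      = conj (u 0) * conj (v 0) * Real.cos (θ / 2)
        + conj (u 1) * conj (v 1) * (exp (φ * I) * Real.sin (θ / 2)) := by
  simp [ip4, tens, diagState, Fintype.sum_prod_type, Fin.sum_univ_two, Prod.ext_iff]

noncomputable def equatorial (a : ℂ) : Fin 2 → ℂ :=
  ![(((Real.sqrt 2)⁻¹ : ℝ) : ℂ), (((Real.sqrt 2)⁻¹ : ℝ) : ℂ) * a]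

lemma norm_ip4_tens_equatorial_diagState_sq {a b : ℂ} (ha : ‖a‖ = 1) (hb : ‖b‖ = 1)
    (θ φ : ℝ) :
    ‖ip4 (tens (equatorial a) (equatorial b)) (diagState θ φ)‖ ^ 2
      = (1 + Real.sin θ * (conj (a * b) * exp (φ * I)).re) / 4 := by
  have hsqrt : (((Real.sqrt 2)⁻¹ : ℝ) : ℂ) ^ 2 = 1 / 2 := by
    rw [← ofReal_pow, inv_pow, Real.sq_sqrt zero_le_two]; norm_num
  set w := conj (a * b) * exp (φ * I)
  have hw : ‖w‖ = 1 := by simp [w, ha, hb, norm_exp_ofReal_mul_I]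
  have hamp : ip4 (tens (equatorial a) (equatorial b)) (diagState θ φ)
      = (Real.cos (θ / 2) + w * Real.sin (θ / 2)) / 2 := by
    rw [ip4_tens_diagState]
    simp only [equatorial, Matrix.cons_val_zero, Matrix.cons_val_one, map_mul, conj_ofReal, w]
    linear_combination (Real.cos (θ / 2) + conj a * conj b * exp (φ * I) * Real.sin (θ / 2)) * hsqrt
  have hw' : normSq w = 1 := by rw [normSq_eq_norm_sq, hw, one_pow]
  have hsin : Real.sin θ = 2 * Real.sin (θ / 2) * Real.cos (θ / 2) := by
    rw [← Real.sin_two_mul]; ring_nf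
  rw [hamp, Complex.sq_norm, normSq_div, normSq_add, normSq_mul, hw', hsin]
  simp only [normSq_ofReal, mul_re, conj_re, conj_im, ofReal_re, ofReal_im, normSq_ofNat]
  linear_combination (Real.sin_sq_add_cos_sq (θ / 2)) / 4

lemma pauliMeas_eq_equatorial (i s : Fin 2) :
    pauliMeas i s = equatorial (I ^ (i : ℕ) * spin s) := by
  funext k
  fin_cases i <;> fin_cases s <;> fin_cases k <;>
    simp [pauliMeas, Bx, By, equatorial, spin, mul_comm]

lemma norm_I_pow_mul_spin (i s : Fin 2) : ‖I ^ (i : ℕ) * spin s‖ = 1 := by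
  fin_cases s <;> simp [spin]

lemma born_pauliMeas_diagState (θ φ : ℝ) (i j s t : Fin 2) :
    born pauliMeas pauliMeas (diagState θ φ) i j s t
      = (1 + spin s * spin t *
          (Real.sin θ * (conj (I ^ (i : ℕ) * I ^ (j : ℕ)) * exp (φ * I)).re)) / 4 := by
  rw [born, pauliMeas_eq_equatorial, pauliMeas_eq_equatorial,
    norm_ip4_tens_equatorial_diagState_sq (norm_I_pow_mul_spin i s) (norm_I_pow_mul_spin j t)]
  congr 2
  have hphase : conj (I ^ (i : ℕ) * spin s * (I ^ (j : ℕ) * spin t)) * exp (φ * I)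
      = ((spin s * spin t : ℝ) : ℂ) * (conj (I ^ (i : ℕ) * I ^ (j : ℕ)) * exp (φ * I)) := by
    simp only [map_mul, conj_ofReal]
    push_cast
    ring
  rw [hphase, re_ofReal_mul]
  ring

lemma chsh_born_pauliMeas_diagState (θ φ : ℝ) :
    chsh (born pauliMeas pauliMeas (diagState θ φ))
      = 2 * Real.sin θ * (Real.cos φ + Real.sin φ) := by
  simp only [chsh, correlation_eq_of_forall_eq (born_pauliMeas_diagState θ φ _ _)]
  simp [exp_mul_I, cos_ofReal_re, sin_ofReal_re]
  ring

lemma sin_pi_div_four_lt_sin {θ : ℝ} (h₁ : Real.pi / 4 < θ) (h₂ : θ < 3 * Real.pi / 4) :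
    Real.sin (Real.pi / 4) < Real.sin θ := by
  have hπ := Real.pi_pos
  rcases le_or_gt θ (Real.pi / 2) with h | h
  · exact Real.strictMonoOn_sin ⟨by linarith, by linarith⟩ ⟨by linarith, h⟩ h₁
  · rw [← Real.sin_pi_sub θ]
    exact Real.strictMonoOn_sin ⟨by linarith, by linarith⟩ ⟨by linarith, by linarith⟩
      (by linarith)

/-- for `π/4 < θ < 3π/4`, the Born-rule empirical model of
`|diag;θ,π/4⟩` with respect to the scenario `S(B_x, B_y)` is contextual, and
consequently its contextual fraction is strictly positive. -/
theorem diag_high_entanglement_contextual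
    (θ : ℝ) (h₁ : Real.pi / 4 < θ) (h₂ : θ < 3 * Real.pi / 4) :
    ¬ Noncontextual (born pauliMeas pauliMeas (diagState θ (Real.pi / 4))) ∧
    0 < CF (born pauliMeas pauliMeas (diagState θ (Real.pi / 4))) := by
  have hsin := sin_pi_div_four_lt_sin h₁ h₂
  have hchsh : 2 < chsh (born pauliMeas pauliMeas (diagState θ (Real.pi / 4))) := by
    rw [chsh_born_pauliMeas_diagState, Real.cos_pi_div_four]
    rw [Real.sin_pi_div_four] at hsin ⊢
    nlinarith [Real.mul_self_sqrt zero_le_two, Real.sqrt_nonneg 2]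
  exact ⟨fun hnc => (chsh_le_two_of_noncontextual hnc).not_gt hchsh,
    sub_pos.2 (NCF_lt_one_of_two_lt_chsh hchsh)⟩
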